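/- arXiv:2511.08807 — 5 statements merged into one kernel-verified Lean document; each statement's English description precedes it below -/
import Mathlib

section
/- Let D = (A,B) be a simple bipartite digraph with |A| = n ≤ m = |B|, and suppose δ_A = min_{x∈A} min(d⁺(x), d⁻(x)) ≥ 2n(n−1). Then dib(D) ≥ n. -/
open Classical

/-- A closed directed walk of length `n+1` inside the set `S`. -/
def IsClosedWalkIn {V : Type*} (E : V → V → Prop) (S : Set V) (n : ℕ)
    (c : Fin (n + 1) → V) : Prop :=
  (∀ i, c i ∈ S) ∧ ∀ i : Fin (n + 1), E (c i) (c (i + 1))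

/-- The set `S` induces no directed cycle (equivalently, no closed directed walk). -/
def AcyclicSet {V : Type*} (E : V → V → Prop) (S : Set V) : Prop :=
  ¬ ∃ (n : ℕ) (c : Fin (n + 1) → V), IsClosedWalkIn E S n c

/-- An acyclic coloring: every color class induces no directed cycle. -/
def AcyclicColoring {V : Type*} (E : V → V → Prop) {k : ℕ} (Γ : V → Fin k) : Prop :=
  ∀ i : Fin k, AcyclicSet E {v | Γ v = i}

/-- `u` is a b⁺-vertex: it has an out-neighbor of every other color. -/
def IsBPlus {V : Type*} (E : V → V → Prop) {k : ℕ} (Γ : V → Fin k) (u : V) : Prop :=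
  ∀ j : Fin k, j ≠ Γ u → ∃ w, E u w ∧ Γ w = j

/-- `u` is a b⁻-vertex: it has an in-neighbor of every other color. -/
def IsBMinus {V : Type*} (E : V → V → Prop) {k : ℕ} (Γ : V → Fin k) (u : V) : Prop :=
  ∀ j : Fin k, j ≠ Γ u → ∃ w, E w u ∧ Γ w = j

/-- A b-coloring: an acyclic coloring in which every color class contains a
b⁺-vertex and a b⁻-vertex. -/
def IsBColoring {V : Type*} (E : V → V → Prop) {k : ℕ} (Γ : V → Fin k) : Prop :=
  AcyclicColoring E Γ ∧
    ∀ i : Fin k, (∃ u, Γ u = i ∧ IsBPlus E Γ u) ∧ (∃ u, Γ u = i ∧ IsBMinus E Γ u)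

/-- The dib-chromatic number: the maximum number of colors of a b-coloring. -/
noncomputable def dib {V : Type*} (E : V → V → Prop) : ℕ :=
  sSup {k | ∃ Γ : V → Fin k, IsBColoring E Γ}

/-- The dichromatic number: the minimum number of colors of an acyclic coloring. -/
noncomputable def dc {V : Type*} (E : V → V → Prop) : ℕ :=
  sInf {k | ∃ Γ : V → Fin k, AcyclicColoring E Γ}

/-- Out-degree. -/
noncomputable def outDeg {V : Type*} (E : V → V → Prop) (v : V) : ℕ := {w | E v w}.ncard

/-- In-degree. -/
noncomputable def inDeg {V : Type*} (E : V → V → Prop) (v : V) : ℕ := {w | E w v}.ncard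

/-- `(A, B)` is a bipartition of the digraph: the parts are disjoint independent sets
covering all vertices, and every arc goes between the parts. -/
def IsBipartition {V : Type*} (E : V → V → Prop) (A B : Set V) : Prop :=
  Disjoint A B ∧ A ∪ B = Set.univ ∧
    ∀ u v, E u v → (u ∈ A ∧ v ∈ B) ∨ (u ∈ B ∧ v ∈ A)

/-- The digraph is weakly connected. -/
def WeaklyConnected {V : Type*} (E : V → V → Prop) : Prop :=
  ∀ u v : V, Relation.ReflTransGen (fun a b => E a b ∨ E b a) u v

/-- The set `S` is weakly connected in the induced subdigraph. -/
def WeaklyConnectedOn {V : Type*} (E : V → V → Prop) (S : Set V) : Prop :=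
  ∀ ⦃u⦄, u ∈ S → ∀ ⦃v⦄, v ∈ S →
    Relation.ReflTransGen (fun a b => (E a b ∨ E b a) ∧ a ∈ S ∧ b ∈ S) u v

/-- A simple digraph (oriented graph): no digons. -/
def SimpleDigraph' {V : Type*} (E : V → V → Prop) : Prop :=
  ∀ u v, E u v → ¬ E v u
lemma acyclic_of_subsingleton_inter {V : Type*} (E : V → V → Prop) (A B : Set V)
    (hbip : IsBipartition E A B) (hsimple : SimpleDigraph' E) (S : Set V)
    (hsub : ∀ u ∈ S ∩ A, ∀ v ∈ S ∩ A, u = v) : AcyclicSet E S := by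
  obtain ⟨hdisj, -, hE⟩ := hbip
  rintro ⟨k, c, hc, he⟩
  have hnB : ∀ i, c i ∈ B → c (i+1) ∈ A := by
    intro i hi
    rcases hE _ _ (he i) with ⟨h1, _⟩ | ⟨_, h2⟩
    · exact absurd (hdisj.ne_of_mem h1 hi) (fun h => h rfl)
    · exact h2
  have hnA : ∀ i, c i ∈ A → c (i+1) ∈ B := by
    intro i hi
    rcases hE _ _ (he i) with ⟨_, h1⟩ | ⟨h2, _⟩
    · exact h1
    · exact absurd (hdisj.ne_of_mem hi h2) (fun h => h rfl)
  obtain ⟨i0, hi0⟩ : ∃ i, c i ∈ A := by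
    by_cases h : c 0 ∈ A
    · exact ⟨0, h⟩
    · refine ⟨1, ?_⟩
      have : c 0 ∈ B := by
        rcases hE _ _ (he 0) with ⟨h1, _⟩ | ⟨h1, _⟩
        · exact absurd h1 h
        · exact h1
      simpa using hnB 0 this
  have h1 : c (i0 + 1) ∈ B := hnA i0 hi0
  have h2 : c (i0 + 1 + 1) ∈ A := hnB _ h1
  have heq : c (i0 + 1 + 1) = c i0 := hsub _ ⟨hc _, h2⟩ _ ⟨hc _, hi0⟩
  exact hsimple _ _ (he i0) (by rw [← heq]; exact he (i0 + 1))

/-- a simple bipartite digraph with δ_A ≥ 2n(n−1) has dib ≥ n. -/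
theorem stmt14 {V : Type*} [Fintype V] (E : V → V → Prop) (A B : Set V)
    (hbip : IsBipartition E A B) (hsimple : SimpleDigraph' E)
    (n m : ℕ) (hA : A.ncard = n) (hB : B.ncard = m) (hnm : n ≤ m)
    (hδA : ∀ x ∈ A, 2 * n * (n - 1) ≤ outDeg E x ∧ 2 * n * (n - 1) ≤ inDeg E x) :
    n ≤ dib E := by
  classical
  rcases Nat.eq_zero_or_pos n with rfl | hnpos
  · exact Nat.zero_le _
  have hcardA : Nat.card A = n := by rw [Nat.card_coe_set_eq, hA]
  have e : A ≃ Fin n := Finite.equivFinOfCardEq hcardA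
  set x : Fin n → V := fun i => (e.symm i : V) with hxdef
  have hxA : ∀ i, x i ∈ A := fun i => (e.symm i).2
  have hxcol : ∀ (i : Fin n) (h : x i ∈ A), e ⟨x i, h⟩ = i := by
    intro i h
    have : (⟨x i, h⟩ : A) = e.symm i := Subtype.ext rfl
    rw [this, e.apply_symm_apply]
  -- Hall's theorem setup
  let ι := {p : Fin n × Fin n // p.1 ≠ p.2} × Bool
  let t : ι → Finset V := fun idx =>
    if idx.2 then (Set.toFinite {w | E (x idx.1.1.1) w}).toFinset
    else (Set.toFinite {w | E w (x idx.1.1.1)}).toFinset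
  have htcard : ∀ idx : ι, 2 * n * (n - 1) ≤ (t idx).card := by
    rintro ⟨p, b⟩
    rcases hδA (x p.1.1) (hxA _) with ⟨h1, h2⟩
    cases b
    · show 2 * n * (n - 1) ≤ ((Set.toFinite {w | E w (x p.1.1)}).toFinset).card
      rw [← Set.ncard_eq_toFinset_card]
      exact h2
    · show 2 * n * (n - 1) ≤ ((Set.toFinite {w | E (x p.1.1) w}).toFinset).card
      rw [← Set.ncard_eq_toFinset_card]
      exact h1
  have hsubcard : Fintype.card {p : Fin n × Fin n // p.1 = p.2} = n := by
    have eqv : Fin n ≃ {p : Fin n × Fin n // p.1 = p.2} :=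
      { toFun := fun i => ⟨(i, i), rfl⟩
        invFun := fun q => q.1.1
        left_inv := fun i => rfl
        right_inv := fun q => Subtype.ext (Prod.ext rfl q.2) }
    have := Fintype.card_congr eqv
    simpa using this.symm
  have hcardι : Fintype.card ι = 2 * n * (n - 1) := by
    have h1 : Fintype.card {p : Fin n × Fin n // p.1 ≠ p.2} = n * n - n := by
      rw [Fintype.card_subtype_compl, hsubcard]
      simp [Fintype.card_prod]
    show Fintype.card ({p : Fin n × Fin n // p.1 ≠ p.2} × Bool) = 2 * n * (n - 1)
    rw [Fintype.card_prod, h1, Fintype.card_bool]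
    obtain ⟨k, rfl⟩ : ∃ k, n = k + 1 := ⟨n - 1, (Nat.succ_pred_eq_of_pos hnpos).symm⟩
    have hkk : (k + 1) * (k + 1) - (k + 1) = (k + 1) * k := by
      rw [Nat.mul_succ, Nat.add_sub_cancel]
    rw [hkk, Nat.add_sub_cancel]
    ring
  have hall : ∀ s : Finset ι, s.card ≤ (s.biUnion t).card := by
    intro s
    rcases s.eq_empty_or_nonempty with rfl | ⟨i0, hi0⟩
    · simp
    · calc s.card ≤ Fintype.card ι := Finset.card_le_univ s
        _ = 2 * n * (n - 1) := hcardι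
        _ ≤ (t i0).card := htcard i0
        _ ≤ (s.biUnion t).card :=
            Finset.card_le_card (Finset.subset_biUnion_of_mem t hi0)
  obtain ⟨f, hfinj, hft⟩ := (Finset.all_card_le_biUnion_card_iff_exists_injective t).1 hall
  have hftE : ∀ p : {p : Fin n × Fin n // p.1 ≠ p.2},
      E (x p.1.1) (f (p, true)) ∧ E (f (p, false)) (x p.1.1) := by
    intro p
    constructor
    · have := hft (p, true)
      simpa [t, Set.Finite.mem_toFinset] using this
    · have := hft (p, false)
      simpa [t, Set.Finite.mem_toFinset] using this
  have hfB : ∀ idx : ι, f idx ∉ A := by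
    rintro ⟨p, b⟩ hmem
    have hBmem : f (p, b) ∈ B := by
      cases b
      · rcases hbip.2.2 _ _ (hftE p).2 with ⟨_, h⟩ | ⟨h, _⟩
        · exact (Set.disjoint_left.mp hbip.1 (hxA p.1.1) h).elim
        · exact h
      · rcases hbip.2.2 _ _ (hftE p).1 with ⟨_, h⟩ | ⟨h, _⟩
        · exact h
        · exact (Set.disjoint_left.mp hbip.1 (hxA p.1.1) h).elim
    exact Set.disjoint_left.mp hbip.1 hmem hBmem
  let Γ : V → Fin n := fun v =>
    if h : v ∈ A then e ⟨v, h⟩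
    else if h2 : ∃ idx, f idx = v then (Classical.choose h2).1.1.2 else ⟨0, hnpos⟩
  have hΓx : ∀ i, Γ (x i) = i := by
    intro i
    simp only [Γ, dif_pos (hxA i)]
    exact hxcol i (hxA i)
  have hΓf : ∀ idx : ι, Γ (f idx) = idx.1.1.2 := by
    intro idx
    have h2 : ∃ idx', f idx' = f idx := ⟨idx, rfl⟩
    simp only [Γ, dif_neg (hfB idx), dif_pos h2]
    rw [hfinj (Classical.choose_spec h2)]
  have hone : ∀ (i : Fin n) (v : V), v ∈ A → Γ v = i → v = x i := by
    intro i v hv hΓv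
    have he : e ⟨v, hv⟩ = i := by simpa only [Γ, dif_pos hv] using hΓv
    have : (⟨v, hv⟩ : A) = e.symm i := by rw [← he, e.symm_apply_apply]
    exact congrArg Subtype.val this
  have hbcol : IsBColoring E Γ := by
    constructor
    · intro i
      apply acyclic_of_subsingleton_inter E A B hbip hsimple
      rintro u ⟨hu1, hu2⟩ v ⟨hv1, hv2⟩
      rw [hone i u hu2 hu1, hone i v hv2 hv1]
    · intro i
      constructor
      · refine ⟨x i, hΓx i, fun j hj => ?_⟩
        rw [hΓx i] at hj
        exact ⟨f (⟨(i, j), fun hc => hj hc.symm⟩, true),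
          (hftE ⟨(i, j), fun hc => hj hc.symm⟩).1, hΓf _⟩
      · refine ⟨x i, hΓx i, fun j hj => ?_⟩
        rw [hΓx i] at hj
        exact ⟨f (⟨(i, j), fun hc => hj hc.symm⟩, false),
          (hftE ⟨(i, j), fun hc => hj hc.symm⟩).2, hΓf _⟩
  have hbdd : BddAbove {k | ∃ Γ : V → Fin k, IsBColoring E Γ} := by
    refine ⟨Fintype.card V, ?_⟩
    rintro k ⟨Γ', hΓ'⟩
    let g : Fin k → V := fun i => Classical.choose ((hΓ'.2 i).1)
    have hg : Function.Injective g := by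
      intro a b h
      have ha : Γ' (g a) = a := (Classical.choose_spec ((hΓ'.2 a).1)).1
      have hb' : Γ' (g b) = b := (Classical.choose_spec ((hΓ'.2 b).1)).1
      have h3 : Γ' (g a) = Γ' (g b) := congrArg Γ' h
      rw [ha, hb'] at h3
      exact h3
    calc k = Fintype.card (Fin k) := (Fintype.card_fin k).symm
      _ ≤ Fintype.card V := Fintype.card_le_of_injective g hg
  exact le_csSup hbdd ⟨Γ, hbcol⟩
end

section
/- Let D = (A,B) be an orientation of the complete bipartite graph K_{n,m} (for every a ∈ A, b ∈ B exactly one of the arcs ab, ba is present) with |A| = n ≤ m = |B|, and suppose every vertex of A has out-degree and in-degree at least n². Then dib(D) ≥ n. -/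
open Classical

/-- an orientation of K_{n,m} (n ≤ m) in which every vertex of A has
out- and in-degree at least n² has dib ≥ n. -/
theorem stmt15 {V : Type*} [Fintype V] (E : V → V → Prop) (A B : Set V)
    (hbip : IsBipartition E A B) (hsimple : SimpleDigraph' E)
    (horient : ∀ a ∈ A, ∀ b ∈ B, E a b ∨ E b a)
    (n m : ℕ) (hA : A.ncard = n) (hB : B.ncard = m) (hnm : n ≤ m)
    (hδA : ∀ x ∈ A, n ^ 2 ≤ outDeg E x ∧ n ^ 2 ≤ inDeg E x) :
    n ≤ dib E := by
  classical
  rcases Nat.eq_zero_or_pos n with h0 | hn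
  · exact h0 ▸ Nat.zero_le _
  obtain ⟨hdisj, hcover, harc⟩ := hbip
  have hAB : ∀ v, v ∈ A → v ∈ B → False := fun v hvA hvB =>
    Set.disjoint_left.mp hdisj hvA hvB
  haveI : Fintype A := Fintype.ofFinite A
  have hcardA : Fintype.card A = n := by
    rw [← Nat.card_eq_fintype_card, Nat.card_coe_set_eq, hA]
  let e : A ≃ Fin n := Fintype.equivFinOfCardEq hcardA
  let a : Fin n → V := fun i => (e.symm i : V)
  have haA : ∀ i, a i ∈ A := fun i => (e.symm i).2
  let Nset : Fin n → Bool → Finset V := fun i sg =>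
    Finset.univ.filter (fun b => if sg then E (a i) b else E b (a i))
  have hmemT : ∀ i b, b ∈ Nset i true ↔ E (a i) b := by
    intro i b; simp [Nset]
  have hmemF : ∀ i b, b ∈ Nset i false ↔ E b (a i) := by
    intro i b; simp [Nset]
  have hNcard : ∀ i sg, n ^ 2 ≤ (Nset i sg).card := by
    intro i sg
    cases sg
    · have key : Nset i false = {w | E w (a i)}.toFinset := by
        ext b; simp [Nset, Set.mem_toFinset]
      rw [key, ← Set.ncard_eq_toFinset_card']
      exact (hδA _ (haA i)).2
    · have key : Nset i true = {w | E (a i) w}.toFinset := by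
        ext b; simp [Nset, Set.mem_toFinset]
      rw [key, ← Set.ncard_eq_toFinset_card']
      exact (hδA _ (haA i)).1
  have hNB : ∀ i sg b, b ∈ Nset i sg → b ∈ B := by
    intro i sg b hb
    cases sg
    · rcases harc _ _ ((hmemF i b).1 hb) with ⟨h1, h2⟩ | ⟨h1, h2⟩
      · exact (hAB _ (haA i) h2).elim
      · exact h1
    · rcases harc _ _ ((hmemT i b).1 hb) with ⟨h1, h2⟩ | ⟨h1, h2⟩
      · exact h2
      · exact (hAB _ (haA i) h1).elim
  -- Hall's theorem setup
  let t : Fin n × Bool × Fin n → Finset V := fun p => Nset p.1 p.2.1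
  have hall : ∀ s : Finset (Fin n × Bool × Fin n), s.card ≤ (s.biUnion t).card := by
    intro s
    set P := s.image (fun p => (p.1, p.2.1)) with hPdef
    set U := s.biUnion t with hUdef
    have hsub : ∀ q ∈ P, Nset q.1 q.2 ⊆ U := by
      intro q hq
      rcases Finset.mem_image.mp hq with ⟨p, hp, rfl⟩
      exact Finset.subset_biUnion_of_mem t hp
    have h1 : s.card ≤ P.card * n := by
      have h := Finset.card_le_card_of_injOn
        (fun p : Fin n × Bool × Fin n => ((p.1, p.2.1), p.2.2))
        (t := P ×ˢ (Finset.univ : Finset (Fin n)))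
        (fun p hp => Finset.mem_product.mpr
          ⟨Finset.mem_image_of_mem _ hp, Finset.mem_univ _⟩)
        (by
          intro p hp q hq hpq
          obtain ⟨i, sg, j⟩ := p
          obtain ⟨i', sg', j'⟩ := q
          simp_all)
      simpa [Finset.card_product] using h
    have h3 : P.card * n ^ 2 ≤ ∑ q ∈ P, (Nset q.1 q.2).card := by
      calc P.card * n ^ 2 = ∑ _q ∈ P, n ^ 2 := by
            rw [Finset.sum_const, smul_eq_mul]
        _ ≤ _ := Finset.sum_le_sum (fun q _ => hNcard q.1 q.2)
    have h4 : ∑ q ∈ P, (Nset q.1 q.2).card ≤ U.card * n := by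
      have hrw : ∀ q ∈ P, (Nset q.1 q.2).card
          = ∑ b ∈ U, (if b ∈ Nset q.1 q.2 then 1 else 0) := by
        intro q hq
        have : Nset q.1 q.2 = U.filter (fun b => b ∈ Nset q.1 q.2) := by
          rw [Finset.filter_mem_eq_inter, Finset.inter_eq_right.mpr (hsub q hq)]
        conv_lhs => rw [this]
        rw [Finset.card_filter]
      calc ∑ q ∈ P, (Nset q.1 q.2).card
          = ∑ q ∈ P, ∑ b ∈ U, (if b ∈ Nset q.1 q.2 then 1 else 0) :=
            Finset.sum_congr rfl hrw
        _ = ∑ b ∈ U, ∑ q ∈ P, (if b ∈ Nset q.1 q.2 then 1 else 0) :=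
            Finset.sum_comm
        _ ≤ ∑ _b ∈ U, n := by
            refine Finset.sum_le_sum (fun b _ => ?_)
            rw [← Finset.card_filter]
            have h := Finset.card_le_card_of_injOn
              (s := P.filter (fun q => b ∈ Nset q.1 q.2))
              (fun q : Fin n × Bool => q.1)
              (t := (Finset.univ : Finset (Fin n)))
              (fun q _ => Finset.mem_univ _)
              (by
                intro q hq q' hq' hqq
                obtain ⟨hqP, hbq⟩ := Finset.mem_filter.mp hq
                obtain ⟨hq'P, hbq'⟩ := Finset.mem_filter.mp hq'
                obtain ⟨i, sg⟩ := q
                obtain ⟨i', sg'⟩ := q'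
                simp only at hqq
                subst hqq
                suffices hs : sg = sg' by rw [hs]
                cases sg <;> cases sg'
                · rfl
                · exact (hsimple _ _ ((hmemT i b).1 hbq') ((hmemF i b).1 hbq)).elim
                · exact (hsimple _ _ ((hmemT i b).1 hbq) ((hmemF i b).1 hbq')).elim
                · rfl)
            simpa using h
        _ = U.card * n := by rw [Finset.sum_const, smul_eq_mul]
    have h5 : P.card * n ≤ U.card := by
      have hmul : (P.card * n) * n ≤ U.card * n := by
        calc (P.card * n) * n = P.card * n ^ 2 := by ring
          _ ≤ U.card * n := le_trans h3 h4
      exact Nat.le_of_mul_le_mul_right hmul hn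
    exact h1.trans h5
  obtain ⟨f, hfinj, hft⟩ :=
    (Finset.all_card_le_biUnion_card_iff_exists_injective t).mp hall
  have hfB : ∀ p, f p ∈ B := fun p => hNB p.1 p.2.1 _ (hft p)
  let Γ : V → Fin n := fun v =>
    if hv : v ∈ A then e ⟨v, hv⟩
    else if hp : ∃ p : Fin n × Bool × Fin n, f p = v then (Classical.choose hp).2.2
    else ⟨0, hn⟩
  have hΓ : ∀ v, Γ v = if hv : v ∈ A then e ⟨v, hv⟩
      else if hp : ∃ p : Fin n × Bool × Fin n, f p = v then (Classical.choose hp).2.2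
      else ⟨0, hn⟩ := fun v => rfl
  have hΓa : ∀ i, Γ (a i) = i := by
    intro i
    rw [hΓ, dif_pos (haA i)]
    have hsub : (⟨a i, haA i⟩ : A) = e.symm i := Subtype.ext rfl
    rw [hsub, Equiv.apply_symm_apply]
  have hΓf : ∀ p, Γ (f p) = p.2.2 := by
    intro p
    have hnA : f p ∉ A := fun h => hAB _ h (hfB p)
    have hex : ∃ q : Fin n × Bool × Fin n, f q = f p := ⟨p, rfl⟩
    rw [hΓ, dif_neg hnA, dif_pos hex]
    rw [hfinj (Classical.choose_spec hex)]
  have hacyc : AcyclicColoring E Γ := by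
    intro i h
    obtain ⟨n', c, hc⟩ := h
    have hcS : ∀ s, Γ (c s) = i := hc.1
    have hcE : ∀ s : Fin (n' + 1), E (c s) (c (s + 1)) := hc.2
    obtain ⟨s, hsB⟩ : ∃ s, c s ∈ B := by
      rcases harc _ _ (hcE 0) with ⟨h1, h2⟩ | ⟨h1, h2⟩
      · exact ⟨0 + 1, h2⟩
      · exact ⟨0, h1⟩
    have arc1 : E (c (s - 1)) (c s) := by
      have h := hcE (s - 1)
      rwa [sub_add_cancel] at h
    have arc2 : E (c s) (c (s + 1)) := hcE s
    have huA : c (s - 1) ∈ A := by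
      rcases harc _ _ arc1 with ⟨h1, _⟩ | ⟨_, h2⟩
      · exact h1
      · exact (hAB _ h2 hsB).elim
    have hwA : c (s + 1) ∈ A := by
      rcases harc _ _ arc2 with ⟨h1, _⟩ | ⟨_, h2⟩
      · exact (hAB _ h1 hsB).elim
      · exact h2
    have e1 : Γ (c (s - 1)) = i := hcS _
    have e2 : Γ (c (s + 1)) = i := hcS _
    rw [hΓ, dif_pos huA] at e1
    rw [hΓ, dif_pos hwA] at e2
    have heq : c (s - 1) = c (s + 1) :=
      congrArg Subtype.val (e.injective (e1.trans e2.symm))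
    exact hsimple _ _ arc2 (heq ▸ arc1)
  have hbcol : IsBColoring E Γ := by
    refine ⟨hacyc, fun i => ⟨⟨a i, hΓa i, ?_⟩, ⟨a i, hΓa i, ?_⟩⟩⟩
    · intro j _
      exact ⟨f (i, true, j), (hmemT i _).1 (hft (i, true, j)), hΓf (i, true, j)⟩
    · intro j _
      exact ⟨f (i, false, j), (hmemF i _).1 (hft (i, false, j)), hΓf (i, false, j)⟩
  have hmem : n ∈ {k | ∃ Γ : V → Fin k, IsBColoring E Γ} := ⟨Γ, hbcol⟩
  have hbdd : BddAbove {k | ∃ Γ : V → Fin k, IsBColoring E Γ} := by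
    refine ⟨Fintype.card V, ?_⟩
    rintro k ⟨Γ', hΓ'⟩
    have hsurj : Function.Surjective Γ' := by
      intro j
      obtain ⟨u, hu, _⟩ := (hΓ'.2 j).1
      exact ⟨u, hu⟩
    simpa using Fintype.card_le_of_surjective Γ' hsurj
  exact le_csSup hbdd hmem
end

section
/- Let D = (A,B) be a simple bipartite digraph with |A| = n ≤ m = |B|, and for y₁, y₂ ∈ B set c(y₁,y₂) = |N⁺(y₁) ∩ N⁻(y₂)|. If for some pair y₁, y₂ ∈ B one has 2·c(y₁,y₂)² < ((m−2)/(m−2−(δ_A−1)))^⌊(m−2)/c(y₁,y₂)⌋, then dib(D) ≥ c(y₁,y₂) + 1. -/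
open Classical

/-
Let `S = N⁺(y₁) ∩ N⁻(y₂) = {x₁, …, x_c}` and `B' = B \ {y₁, y₂}`, of size `M = m - 2`. Colour
`y₁`, `y₂` and `A \ S` with colour `0`, give `xᵢ` colour `i`, and split `B'` into colours
`1, …, c`. Since `D` is bipartite, every arc inside a colour class meets `xᵢ`, respectively
`{y₁, y₂}`; as `D` has no digons and class `0` contains no path `y₁ → a → y₂`, every class is
acyclic. `y₁` and `y₂` are b-vertices of colour `0`, and `xᵢ` is a b-vertex of colour `i` as
soon as both its out- and in-neighbourhood in `B'` (each of size at least `δ_A - 1`) meet every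
colour of `B'`. Colour `B'` by `c` disjoint blocks of size `e = ⌊M / c⌋` placed uniformly at
random: a fixed block misses a fixed neighbourhood with probability at most
`(M - δ_A + 1)ₑ / (M)ₑ ≤ ((M - δ_A + 1) / M)^e`, so the hypothesis leaves room to avoid all `2c²`
bad events. When `c = 0`, a colouring with `dc` colours is already a b-colouring.
-/

section Acyclic

variable {V : Type*} {E : V → V → Prop}

theorem AcyclicSet.mono {S T : Set V} (hT : AcyclicSet E T) (h : S ⊆ T) : AcyclicSet E S :=
  fun ⟨n, c, hmem, hedge⟩ => hT ⟨n, c, fun i => h (hmem i), hedge⟩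

theorem AcyclicSet.swap {S : Set V} (h : AcyclicSet E S) : AcyclicSet (Function.swap E) S := by
  rintro ⟨n, c, hmem, hedge⟩
  refine h ⟨n, fun t => c (-t), fun t => hmem _, fun t => ?_⟩
  simpa [Function.swap, neg_add, sub_eq_add_neg] using hedge (-(t + 1))

theorem acyclicColoring_swap_iff {k : ℕ} {Γ : V → Fin k} :
    AcyclicColoring (Function.swap E) Γ ↔ AcyclicColoring E Γ :=
  ⟨fun h i => (h i).swap, fun h i => (h i).swap⟩

theorem acyclicSet_of_rank {S : Set V} (f : V → ℕ)
    (hf : ∀ u ∈ S, ∀ v ∈ S, E u v → f u < f v) : AcyclicSet E S := by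
  rintro ⟨n, c, hmem, hedge⟩
  have hlt : ∑ t, f (c t) < ∑ t, f (c (t + 1)) :=
    Finset.sum_lt_sum_of_nonempty Finset.univ_nonempty
      fun t _ => hf _ (hmem t) _ (hmem (t + 1)) (hedge t)
  have hshift : ∑ t, f (c (t + 1)) = ∑ t, f (c t) :=
    Equiv.sum_comp (Equiv.addRight 1) fun t => f (c t)
  exact (hshift ▸ hlt).false

theorem SimpleDigraph'.irrefl (hE : SimpleDigraph' E) (v : V) : ¬E v v :=
  fun h => hE v v h h

theorem acyclicSet_of_arcs_meet_pair (hE : SimpleDigraph' E) {S : Set V} {y₁ y₂ : V}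
    (h₁₂ : ¬E y₁ y₂) (hpath : ∀ a ∈ S, E y₁ a → ¬E a y₂)
    (hS : ∀ u ∈ S, ∀ v ∈ S, E u v → u = y₁ ∨ u = y₂ ∨ v = y₁ ∨ v = y₂) :
    AcyclicSet E S := by
  refine acyclicSet_of_rank
    (fun v => if v = y₂ then 1 else if v = y₁ then 3 else if E v y₂ then 0
      else if E y₁ v then 4 else 2) fun u hu v hv huv => ?_
  have hloop := hE.irrefl
  have hdigon := hE u v huv
  rcases hS u hu v hv huv with rfl | rfl | rfl | rfl <;> grind

end Acyclic

section DichromaticNumber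

variable {V : Type*} {E : V → V → Prop}

open Fin.NatCast in
theorem Fin.forall_of_add_one_closed {n : ℕ} {P : Fin (n + 1) → Prop}
    (h : ∀ t, P t → P (t + 1)) {t₀ : Fin (n + 1)} (h₀ : P t₀) (t : Fin (n + 1)) : P t := by
  have key : ∀ d : ℕ, P (t₀ + (d : Fin (n + 1))) := by
    intro d
    induction d with
    | zero => simpa using h₀
    | succ d ih => simpa [add_assoc] using h _ ih
  simpa using key (t - t₀).val

theorem acyclicSet_of_subsingleton (hloop : ∀ v, ¬E v v) {S : Set V} (hS : S.Subsingleton) :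
    AcyclicSet E S := by
  rintro ⟨n, c, hmem, hedge⟩
  have h := hedge 0
  rw [← hS (hmem 0) (hmem (0 + 1))] at h
  exact hloop _ h

/-- Recolouring each vertex of class `i` by a colour missing from its out-neighbourhood
creates no monochromatic cycle: such a cycle could never leave the old class `i`. -/
theorem AcyclicColoring.exists_avoiding_of_not_isBPlus {k : ℕ} {Γ : V → Fin k}
    (hΓ : AcyclicColoring E Γ) (i : Fin k) (h : ∀ u, Γ u = i → ¬IsBPlus E Γ u) :
    ∃ Γ' : V → Fin k, AcyclicColoring E Γ' ∧ ∀ v, Γ' v ≠ i := by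
  have h' : ∀ u, Γ u = i → ∃ j, j ≠ i ∧ ∀ w, E u w → Γ w ≠ j := by
    intro u hu
    simpa [IsBPlus, hu] using h u hu
  choose j hji hj using h'
  refine ⟨fun v => if hv : Γ v = i then j v hv else Γ v, fun a => ?_, fun v => ?_⟩
  · rintro ⟨n, c, hmem, hedge⟩
    by_cases hold : ∃ t, Γ (c t) = i
    · obtain ⟨t₀, ht₀⟩ := hold
      refine hΓ i ⟨n, c, Fin.forall_of_add_one_closed (fun t ht => ?_) ht₀, hedge⟩
      by_contra hnext
      have hat : j (c t) ht = a := (dif_pos ht).symm.trans (hmem t)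
      have hat' : Γ (c (t + 1)) = a := (dif_neg hnext).symm.trans (hmem (t + 1))
      exact hj _ ht _ (hedge t) (hat'.trans hat.symm)
    · push Not at hold
      refine hΓ a ⟨n, c, fun t => ?_, hedge⟩
      simpa [dif_neg (hold t)] using hmem t
  · by_cases hv : Γ v = i
    · simpa [dif_pos hv] using hji v hv
    · simpa [dif_neg hv] using hv

theorem AcyclicColoring.exists_avoiding_of_not_isBMinus {k : ℕ} {Γ : V → Fin k}
    (hΓ : AcyclicColoring E Γ) (i : Fin k) (h : ∀ u, Γ u = i → ¬IsBMinus E Γ u) :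
    ∃ Γ' : V → Fin k, AcyclicColoring E Γ' ∧ ∀ v, Γ' v ≠ i := by
  obtain ⟨Γ', hΓ', hi⟩ :=
    (acyclicColoring_swap_iff.mpr hΓ).exists_avoiding_of_not_isBPlus (E := Function.swap E) i h
  exact ⟨Γ', acyclicColoring_swap_iff.mp hΓ', hi⟩

theorem AcyclicColoring.exists_of_avoiding {k : ℕ} {Γ : V → Fin k}
    (hΓ : AcyclicColoring E Γ) {i : Fin k} (hi : ∀ v, Γ v ≠ i) :
    ∃ Γ' : V → Fin (k - 1), AcyclicColoring E Γ' := by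
  obtain ⟨k, rfl⟩ := Nat.exists_eq_add_one_of_ne_zero i.pos.ne'
  choose Γ' hΓ' using fun v => Fin.exists_succAbove_eq (hi v)
  refine ⟨Γ', fun a => (hΓ (i.succAbove a)).mono fun v hv => ?_⟩
  exact (hΓ' v).symm.trans (congrArg _ hv)

variable [Fintype V]

theorem exists_isBColoring_dc (hloop : ∀ v, ¬E v v) :
    ∃ Γ : V → Fin (dc E), IsBColoring E Γ := by
  have hne : {k | ∃ Γ : V → Fin k, AcyclicColoring E Γ}.Nonempty :=
    ⟨_, Fintype.equivFin V, fun i => acyclicSet_of_subsingleton hloop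
      fun u hu v hv => (Fintype.equivFin V).injective (hu.trans hv.symm)⟩
  obtain ⟨Γ, hΓ⟩ := Nat.sInf_mem hne
  refine ⟨Γ, hΓ, fun i => ?_⟩
  by_contra hbad
  have hmin : ∀ k, (∃ Γ' : V → Fin k, AcyclicColoring E Γ') → dc E ≤ k :=
    fun k hk => Nat.sInf_le hk
  obtain ⟨Γ', hΓ', hi⟩ : ∃ Γ' : V → Fin (dc E), AcyclicColoring E Γ' ∧ ∀ v, Γ' v ≠ i := by
    by_cases hplus : ∃ u, Γ u = i ∧ IsBPlus E Γ u
    · exact hΓ.exists_avoiding_of_not_isBMinus i fun u hu hm => hbad ⟨hplus, u, hu, hm⟩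
    · exact hΓ.exists_avoiding_of_not_isBPlus i fun u hu hp => hplus ⟨u, hu, hp⟩
  have := hmin _ (hΓ'.exists_of_avoiding hi)
  have := i.pos
  omega

theorem le_dib {k : ℕ} {Γ : V → Fin k} (h : IsBColoring E Γ) : k ≤ dib E := by
  refine le_csSup ⟨Fintype.card V, fun k' ⟨Γ', h'⟩ => ?_⟩ ⟨Γ, h⟩
  have hsurj : Function.Surjective Γ' := fun i =>
    let ⟨⟨u, hu, _⟩, _⟩ := h'.2 i
    ⟨u, hu⟩
  simpa using Fintype.card_le_of_surjective Γ' hsurj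

theorem one_le_dib [Nonempty V] (hloop : ∀ v, ¬E v v) : 1 ≤ dib E :=
  let ⟨Γ, hΓ⟩ := exists_isBColoring_dc hloop
  (Γ (Classical.arbitrary V)).pos.trans_le (le_dib hΓ)

end DichromaticNumber

section Counting

open Function

theorem Fintype.card_embedding_mapsTo {α β : Type*} [Fintype α] [Fintype β] (s : Set α)
    (t : Set β) [Fintype s] [Fintype (sᶜ : Set α)] [Fintype t] :
    Fintype.card {g : α ↪ β // Set.MapsTo g s t} =
      (Fintype.card t).descFactorial (Fintype.card s) *
        (Fintype.card β - Fintype.card s).descFactorial (Fintype.card (sᶜ : Set α)) := by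
  let e₁ : {g : α ↪ β // Set.MapsTo g s t} ≃ {g : s ⊕ (sᶜ : Set α) ↪ β // ∀ a, g (.inl a) ∈ t} :=
    Equiv.subtypeEquiv ((Equiv.Set.sumCompl s).embeddingCongr (Equiv.refl β)).symm
      fun g => by simp [Set.MapsTo]
  let e₂ : {g : s ⊕ (sᶜ : Set α) ↪ β // ∀ a, g (.inl a) ∈ t} ≃
      {p : Σ f : s ↪ β, ((sᶜ : Set α) ↪ ↥(Set.range f)ᶜ) // ∀ a, p.1 a ∈ t} :=
    Equiv.subtypeEquiv Equiv.sumEmbeddingEquivSigmaEmbeddingRestricted fun g => Iff.rfl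
  let e₃ := Equiv.subtypeSigmaEquiv (fun f : s ↪ β => (sᶜ : Set α) ↪ ↥(Set.range f)ᶜ)
    fun f => ∀ a, f a ∈ t
  rw [Fintype.card_congr (e₁.trans (e₂.trans e₃)), Fintype.card_sigma]
  simp only [Fintype.card_embedding_eq, Fintype.card_compl_set, Fintype.card_range,
    Finset.sum_const, Finset.card_univ, smul_eq_mul]
  rw [Fintype.card_congr (Equiv.codRestrict s t), Fintype.card_embedding_eq]

theorem Fintype.card_embedding_block_mapsTo {β : Type*} [Fintype β] {c e : ℕ} (j : Fin c)
    (t : Set β) [Fintype t] :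
    Fintype.card {g : Fin c × Fin e ↪ β // Set.MapsTo g {q | q.1 = j} t} =
      (Fintype.card t).descFactorial e * (Fintype.card β - e).descFactorial (c * e - e) := by
  have hblock : Fintype.card {q : Fin c × Fin e | q.1 = j} = e := by
    refine (Fintype.card_congr (Equiv.prodSubtypeFstEquivSubtypeProd (p := (· = j)))).trans ?_
    simp
  rw [Fintype.card_embedding_mapsTo, Fintype.card_compl_set, hblock]
  simp

theorem exists_coloring_forall_exists_mem {ι β : Type*} [Fintype ι] [Fintype β] {c e s : ℕ}
    (hc : 0 < c) (T : ι → Set β) (hT : ∀ t, s ≤ (T t).ncard) (hce : c * e ≤ Fintype.card β)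
    (hlt : Fintype.card ι * c * (Fintype.card β - s).descFactorial e <
      (Fintype.card β).descFactorial e) :
    ∃ χ : β → Fin c, ∀ t j, ∃ b ∈ T t, χ b = j := by
  set M := Fintype.card β
  let bad : ι × Fin c → Finset (Fin c × Fin e ↪ β) := fun tj =>
    Finset.univ.filter fun g => Set.MapsTo g {q | q.1 = tj.2} (T tj.1)ᶜ
  have hbad : ∀ tj, (bad tj).card ≤
      (M - s).descFactorial e * (M - e).descFactorial (c * e - e) := by
    intro tj
    rw [← Fintype.card_subtype, Fintype.card_embedding_block_mapsTo]
    refine Nat.mul_le_mul_right _ (Nat.descFactorial_le _ ?_)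
    rw [Fintype.card_compl_set, ← Nat.card_eq_fintype_card (α := T tj.1), Nat.card_coe_set_eq]
    exact Nat.sub_le_sub_left (hT tj.1) M
  have hrest : 0 < (M - e).descFactorial (c * e - e) :=
    Nat.descFactorial_pos.mpr (by omega)
  have hcount : (Finset.univ.biUnion bad).card < Fintype.card (Fin c × Fin e ↪ β) := by
    calc (Finset.univ.biUnion bad).card
        ≤ ∑ tj, (bad tj).card := Finset.card_biUnion_le
      _ ≤ Fintype.card (ι × Fin c) *
            ((M - s).descFactorial e * (M - e).descFactorial (c * e - e)) :=
          Finset.sum_le_card_nsmul _ _ _ fun tj _ => hbad tj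
      _ = Fintype.card ι * c * (M - s).descFactorial e * (M - e).descFactorial (c * e - e) := by
          simp only [Fintype.card_prod, Fintype.card_fin]; ring
      _ < M.descFactorial e * (M - e).descFactorial (c * e - e) :=
          Nat.mul_lt_mul_of_pos_right hlt hrest
      _ = Fintype.card (Fin c × Fin e ↪ β) := by
          rw [Fintype.card_embedding_eq, Fintype.card_prod, Fintype.card_fin, Fintype.card_fin,
            mul_comm, Nat.descFactorial_mul_descFactorial (Nat.le_mul_of_pos_left e hc)]
  obtain ⟨g, -, hg⟩ := Finset.exists_mem_notMem_of_card_lt_card (s := Finset.univ.biUnion bad)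
    (t := Finset.univ) (by simpa using hcount)
  refine ⟨extend g Prod.fst fun _ => ⟨0, hc⟩, fun t j => ?_⟩
  have hgood : ¬Set.MapsTo g {q | q.1 = j} (T t)ᶜ := fun h =>
    hg (Finset.mem_biUnion.mpr ⟨(t, j), Finset.mem_univ _, Finset.mem_filter.mpr ⟨by simp, h⟩⟩)
  obtain ⟨q, rfl, hq⟩ : ∃ q : Fin c × Fin e, q.1 = j ∧ g q ∈ T t := by
    simpa [Set.MapsTo] using hgood
  exact ⟨g q, hq, g.injective.extend_apply _ _ q⟩

end Counting

theorem Nat.descFactorial_mul_pow_le_descFactorial_mul_pow {a M : ℕ} (h : a ≤ M) (e : ℕ) :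
    a.descFactorial e * M ^ e ≤ M.descFactorial e * a ^ e := by
  induction e with
  | zero => simp
  | succ e ih =>
    rw [Nat.descFactorial_succ, Nat.descFactorial_succ, pow_succ, pow_succ]
    have hstep : (a - e) * M ≤ (M - e) * a := by
      rw [Nat.sub_mul, Nat.sub_mul, mul_comm M a]
      exact Nat.sub_le_sub_left (Nat.mul_le_mul_left e h) (a * M)
    calc (a - e) * a.descFactorial e * (M ^ e * M)
        = ((a - e) * M) * (a.descFactorial e * M ^ e) := by ring
      _ ≤ ((M - e) * a) * (M.descFactorial e * a ^ e) := Nat.mul_le_mul hstep ih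
      _ = (M - e) * M.descFactorial e * (a ^ e * a) := by ring

theorem Nat.mul_descFactorial_lt_descFactorial {K a M e : ℕ} (haM : a ≤ M) (heM : e ≤ M)
    (h : K * a ^ e < M ^ e) : K * a.descFactorial e < M.descFactorial e := by
  have hpos : 0 < M.descFactorial e := Nat.descFactorial_pos.mpr heM
  refine Nat.lt_of_mul_lt_mul_right (a := M ^ e) ?_
  calc K * a.descFactorial e * M ^ e
      = K * (a.descFactorial e * M ^ e) := by ring
    _ ≤ K * (M.descFactorial e * a ^ e) :=
        Nat.mul_le_mul_left K (Nat.descFactorial_mul_pow_le_descFactorial_mul_pow haM e)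
    _ = M.descFactorial e * (K * a ^ e) := by ring
    _ < M.descFactorial e * M ^ e := Nat.mul_lt_mul_of_pos_left h hpos

theorem Nat.mul_descFactorial_lt_of_lt_div_pow {K M d e : ℕ} (hK : 1 ≤ K) (heM : e ≤ M)
    (h : (K : ℝ) < ((M : ℝ) / (M - ((d : ℝ) - 1))) ^ e) :
    K * (M - (d - 1)).descFactorial e < M.descFactorial e := by
  have hKR : (1 : ℝ) ≤ K := by exact_mod_cast hK
  have he : e ≠ 0 := by
    rintro rfl
    rw [pow_zero] at h
    linarith
  rcases Nat.eq_zero_or_pos d with rfl | hd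
  · simp only [Nat.cast_zero, zero_sub, sub_neg_eq_add] at h
    have hle : ((M : ℝ) / (M + 1)) ^ e ≤ 1 :=
      pow_le_one₀ (by positivity) ((div_le_one (by positivity)).mpr (by linarith))
    linarith
  by_cases hMd : M ≤ d - 1
  · obtain ⟨e, rfl⟩ := Nat.exists_eq_succ_of_ne_zero he
    rw [Nat.sub_eq_zero_of_le hMd, Nat.zero_descFactorial_succ, mul_zero]
    exact Nat.descFactorial_pos.mpr heM
  set a := M - (d - 1) with ha
  have haR : ((M : ℝ) - ((d : ℝ) - 1)) = a := by
    rw [ha, Nat.cast_sub (by omega), Nat.cast_sub hd]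
    push_cast
    ring
  have hapos : (0 : ℝ) < a := Nat.cast_pos.mpr (by omega)
  rw [haR, div_pow, lt_div_iff₀ (pow_pos hapos e)] at h
  exact Nat.mul_descFactorial_lt_descFactorial (Nat.sub_le M _) heM (by exact_mod_cast h)

section Bipartite

variable {V : Type*} {E : V → V → Prop} {A B : Set V}

theorem IsBipartition.not_adj_of_mem_B (h : IsBipartition E A B) {u v : V} (hu : u ∈ B)
    (hv : v ∈ B) : ¬E u v := fun huv => by
  rcases h.2.2 u v huv with ⟨hu', -⟩ | ⟨-, hv'⟩
  · exact Set.disjoint_left.mp h.1 hu' hu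
  · exact Set.disjoint_left.mp h.1 hv' hv

theorem IsBipartition.mem_or_mem (h : IsBipartition E A B) (v : V) : v ∈ A ∨ v ∈ B :=
  (Set.mem_union v A B).mp (h.2.1 ▸ Set.mem_univ v)

theorem IsBipartition.right_mem_A (h : IsBipartition E A B) {u v : V} (huv : E u v)
    (hu : u ∈ B) : v ∈ A := by
  rcases h.2.2 u v huv with ⟨hu', -⟩ | ⟨-, hv⟩
  · exact absurd hu (Set.disjoint_left.mp h.1 hu')
  · exact hv

theorem IsBipartition.right_mem_B (h : IsBipartition E A B) {u v : V} (huv : E u v)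
    (hu : u ∈ A) : v ∈ B := by
  rcases h.2.2 u v huv with ⟨-, hv⟩ | ⟨hu', -⟩
  · exact hv
  · exact absurd hu' (Set.disjoint_left.mp h.1 hu)

theorem IsBipartition.left_mem_B (h : IsBipartition E A B) {u v : V} (huv : E u v)
    (hv : v ∈ A) : u ∈ B := by
  rcases h.2.2 u v huv with ⟨-, hv'⟩ | ⟨hu, -⟩
  · exact absurd hv' (Set.disjoint_left.mp h.1 hv)
  · exact hu

end Bipartite

theorem Set.exists_fin_embedding_range_eq {α : Type*} [Finite α] {s : Set α} {n : ℕ}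
    (hs : s.ncard = n) : ∃ x : Fin n ↪ α, Set.range x = s := by
  obtain ⟨k, x, hx⟩ := s.toFinite.fin_embedding
  obtain rfl : k = n := by rw [← hs, ← hx, Set.ncard_range_of_injective x.injective, Nat.card_fin]
  exact ⟨x, hx⟩

section Degrees

variable {V : Type*} [Finite V] {E : V → V → Prop} {A B : Set V} {y₁ y₂ a : V}

theorem ncard_le_ncard_preimage_diff_pair_add_one {N : Set V} (hN : N ⊆ B)
    (hy : y₁ ∉ N ∨ y₂ ∉ N) :
    N.ncard ≤ (((↑) : ↥(B \ {y₁, y₂}) → V) ⁻¹' N).ncard + 1 := by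
  rw [← Set.ncard_image_of_injective _ Subtype.val_injective, Subtype.image_preimage_coe]
  obtain ⟨y, hy⟩ : ∃ y, ∀ v ∈ N, v ∈ ({y₁, y₂} : Set V) → v = y := by
    rcases hy with hy | hy
    · exact ⟨y₂, by rintro v hv (rfl | rfl) <;> trivial⟩
    · exact ⟨y₁, by rintro v hv (rfl | rfl) <;> trivial⟩
  have hsub : N ⊆ insert y (B \ {y₁, y₂} ∩ N) := fun v hv => by
    by_cases hvy : v = y
    · exact .inl hvy
    · exact .inr ⟨⟨hN hv, fun h => hvy (hy v hv h)⟩, hv⟩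
  exact (Set.ncard_le_ncard hsub).trans (Set.ncard_insert_le _ _)

theorem IsBipartition.sub_one_le_ncard_preimage_diff_pair (hbip : IsBipartition E A B)
    (hsimple : SimpleDigraph' E) {δ : ℕ} (ha : a ∈ A) (h₁ : E y₁ a) (h₂ : E a y₂)
    (hδ : δ ≤ min (outDeg E a) (inDeg E a)) :
    δ - 1 ≤ (((↑) : ↥(B \ {y₁, y₂}) → V) ⁻¹' {w | E a w}).ncard ∧
      δ - 1 ≤ (((↑) : ↥(B \ {y₁, y₂}) → V) ⁻¹' {w | E w a}).ncard := by
  have hout : outDeg E a ≤ (((↑) : ↥(B \ {y₁, y₂}) → V) ⁻¹' {w | E a w}).ncard + 1 :=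
    ncard_le_ncard_preimage_diff_pair_add_one (fun _ hw => hbip.right_mem_B hw ha)
      (.inl fun h => hsimple _ _ h₁ h)
  have hin : inDeg E a ≤ (((↑) : ↥(B \ {y₁, y₂}) → V) ⁻¹' {w | E w a}).ncard + 1 :=
    ncard_le_ncard_preimage_diff_pair_add_one (fun _ hw => hbip.left_mem_B hw ha)
      (.inr fun h => hsimple _ _ h₂ h)
  have := le_min_iff.mp hδ
  omega

end Degrees

section LiftColoring

open Function

variable {V : Type*} {c : ℕ} (x : Fin c ↪ V) {B' : Set V} (χ : B' → Fin c)

noncomputable def liftColoring : V → Fin (c + 1) :=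
  extend x Fin.succ fun v => if h : v ∈ B' then (χ ⟨v, h⟩).succ else 0

theorem liftColoring_apply_embedding (i : Fin c) : liftColoring x χ (x i) = i.succ :=
  x.injective.extend_apply _ _ i

theorem liftColoring_apply_of_mem {v : V} (hv : v ∈ B') (hx : v ∉ Set.range x) :
    liftColoring x χ v = (χ ⟨v, hv⟩).succ := by
  rw [liftColoring, extend_apply' _ _ _ hx, dif_pos hv]

theorem liftColoring_apply_of_notMem {v : V} (hv : v ∉ B') (hx : v ∉ Set.range x) :
    liftColoring x χ v = 0 := by
  rw [liftColoring, extend_apply' _ _ _ hx, dif_neg hv]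

theorem notMem_of_liftColoring_eq_zero {v : V} (h : liftColoring x χ v = 0) :
    v ∉ Set.range x ∧ v ∉ B' := by
  by_cases hx : v ∈ Set.range x
  · obtain ⟨i, rfl⟩ := hx
    exact absurd (liftColoring_apply_embedding x χ i ▸ h) (Fin.succ_ne_zero i)
  by_cases hv : v ∈ B'
  · exact absurd (liftColoring_apply_of_mem x χ hv hx ▸ h) (Fin.succ_ne_zero _)
  exact ⟨hx, hv⟩

theorem eq_or_mem_of_liftColoring_eq_succ {v : V} {i : Fin c}
    (h : liftColoring x χ v = i.succ) : v = x i ∨ v ∈ B' := by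
  by_cases hx : v ∈ Set.range x
  · obtain ⟨k, rfl⟩ := hx
    rw [liftColoring_apply_embedding, Fin.succ_inj] at h
    exact .inl (congrArg x h)
  by_cases hv : v ∈ B'
  · exact .inr hv
  · exact absurd (liftColoring_apply_of_notMem x χ hv hx ▸ h).symm (Fin.succ_ne_zero i)

end LiftColoring

section Construction

variable {V : Type*} {E : V → V → Prop} {A B : Set V} {y₁ y₂ : V} {c : ℕ}

theorem acyclicColoring_liftColoring (hbip : IsBipartition E A B) (hsimple : SimpleDigraph' E)
    (hy₁ : y₁ ∈ B) (hy₂ : y₂ ∈ B) (x : Fin c ↪ V)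
    (hx : ∀ a, E y₁ a → E a y₂ → a ∈ Set.range x) (χ : ↥(B \ {y₁, y₂}) → Fin c) :
    AcyclicColoring E (liftColoring x χ) := by
  have hB : ∀ v ∈ B, v ∉ B \ {y₁, y₂} → v = y₁ ∨ v = y₂ := fun v hv hv' => by
    simp only [Set.mem_sdiff, hv, Set.mem_insert_iff, Set.mem_singleton_iff, true_and,
      not_not] at hv'
    exact hv'
  intro col
  induction col using Fin.cases with
  | zero =>
    refine acyclicSet_of_arcs_meet_pair hsimple (hbip.not_adj_of_mem_B hy₁ hy₂)
      (fun a ha h₁ h₂ => (notMem_of_liftColoring_eq_zero x χ ha).1 (hx a h₁ h₂))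
      fun u hu v hv huv => ?_
    rcases hbip.mem_or_mem u with huA | huB
    · have := hB v (hbip.right_mem_B huv huA) (notMem_of_liftColoring_eq_zero x χ hv).2
      tauto
    · have := hB u huB (notMem_of_liftColoring_eq_zero x χ hu).2
      tauto
  | succ i =>
    refine acyclicSet_of_arcs_meet_pair hsimple (hsimple.irrefl (x i))
      (fun a _ h₁ h₂ => hsimple _ _ h₁ h₂) fun u hu v hv huv => ?_
    rcases eq_or_mem_of_liftColoring_eq_succ x χ hu with rfl | hu'
    · exact .inl rfl
    rcases eq_or_mem_of_liftColoring_eq_succ x χ hv with rfl | hv'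
    · exact .inr (.inr (.inl rfl))
    exact absurd huv (hbip.not_adj_of_mem_B hu'.1 hv'.1)

theorem isBColoring_liftColoring (hbip : IsBipartition E A B) (hsimple : SimpleDigraph' E)
    (hy₁ : y₁ ∈ B) (hy₂ : y₂ ∈ B) (x : Fin c ↪ V)
    (hx : Set.range x = {w | E y₁ w} ∩ {w | E w y₂}) (χ : ↥(B \ {y₁, y₂}) → Fin c)
    (hout : ∀ i j, ∃ b : ↥(B \ {y₁, y₂}), E (x i) b ∧ χ b = j)
    (hin : ∀ i j, ∃ b : ↥(B \ {y₁, y₂}), E b (x i) ∧ χ b = j) :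
    IsBColoring E (liftColoring x χ) := by
  have hxS (i : Fin c) : E y₁ (x i) ∧ E (x i) y₂ := by
    have h := Set.mem_range_self (f := x) i
    rwa [hx] at h
  have hrange : ∀ v ∈ B, v ∉ Set.range x := by
    rintro v hv ⟨i, rfl⟩
    exact Set.disjoint_left.mp hbip.1 (hbip.right_mem_A (hxS i).1 hy₁) hv
  have hy (y : V) (hy : y ∈ B) (hy' : y = y₁ ∨ y = y₂) : liftColoring x χ y = 0 :=
    liftColoring_apply_of_notMem x χ (fun h => h.2 hy') (hrange y hy)
  have hb (b : ↥(B \ {y₁, y₂})) : liftColoring x χ b = (χ b).succ :=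
    liftColoring_apply_of_mem x χ b.2 (hrange b b.2.1)
  have hsucc {j : Fin (c + 1)} (hj : j ≠ 0) : ∃ i, E y₁ (x i) ∧ E (x i) y₂ ∧
      liftColoring x χ (x i) = j := by
    obtain ⟨i, rfl⟩ := Fin.exists_succ_eq.mpr hj
    exact ⟨i, (hxS i).1, (hxS i).2, liftColoring_apply_embedding x χ i⟩
  refine ⟨acyclicColoring_liftColoring hbip hsimple hy₁ hy₂ x
    (fun a h₁ h₂ => hx ▸ show a ∈ {w | E y₁ w} ∩ {w | E w y₂} from ⟨h₁, h₂⟩) χ, fun col => ?_⟩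
  induction col using Fin.cases with
  | zero =>
    refine ⟨⟨y₁, hy y₁ hy₁ (.inl rfl), fun j hj => ?_⟩, ⟨y₂, hy y₂ hy₂ (.inr rfl), fun j hj => ?_⟩⟩
    · obtain ⟨i, h₁, -, hi⟩ := hsucc (hy y₁ hy₁ (.inl rfl) ▸ hj)
      exact ⟨x i, h₁, hi⟩
    · obtain ⟨i, -, h₂, hi⟩ := hsucc (hy y₂ hy₂ (.inr rfl) ▸ hj)
      exact ⟨x i, h₂, hi⟩
  | succ i =>
    refine ⟨⟨x i, liftColoring_apply_embedding x χ i, fun j _ => ?_⟩,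
      ⟨x i, liftColoring_apply_embedding x χ i, fun j _ => ?_⟩⟩
    · induction j using Fin.cases with
      | zero => exact ⟨y₂, (hxS i).2, hy y₂ hy₂ (.inr rfl)⟩
      | succ j =>
        obtain ⟨b, hib, rfl⟩ := hout i j
        exact ⟨b, hib, hb b⟩
    · induction j using Fin.cases with
      | zero => exact ⟨y₁, (hxS i).1, hy y₁ hy₁ (.inl rfl)⟩
      | succ j =>
        obtain ⟨b, hbi, rfl⟩ := hin i j
        exact ⟨b, hbi, hb b⟩

end Construction

theorem stmt16_general {V : Type*} [Fintype V] (E : V → V → Prop) (A B : Set V)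
    (hbip : IsBipartition E A B) (hsimple : SimpleDigraph' E)
    (m : ℕ) (hB : B.ncard = m)
    (δA : ℕ) (hδA : δA = sInf ((fun x => min (outDeg E x) (inDeg E x)) '' A))
    (y₁ y₂ : V) (hy₁ : y₁ ∈ B) (hy₂ : y₂ ∈ B) (hyne : y₁ ≠ y₂)
    (c : ℕ) (hc : c = ({w | E y₁ w} ∩ {w | E w y₂}).ncard)
    (hineq : 2 * (c : ℝ) ^ 2 <
      (((m : ℝ) - 2) / ((m : ℝ) - 2 - ((δA : ℝ) - 1))) ^ ((m - 2) / c)) :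
    c + 1 ≤ dib E := by
  rcases Nat.eq_zero_or_pos c with rfl | hc₀
  · have : Nonempty V := ⟨y₁⟩
    exact one_le_dib hsimple.irrefl
  obtain ⟨x, hx⟩ := Set.exists_fin_embedding_range_eq hc.symm
  have hxS (i : Fin c) : E y₁ (x i) ∧ E (x i) y₂ := hx.subset (Set.mem_range_self i)
  have hxA (i : Fin c) : x i ∈ A := hbip.right_mem_A (hxS i).1 hy₁
  let T : Fin c ⊕ Fin c → Set ↥(B \ {y₁, y₂}) :=
    Sum.elim (fun i => (↑) ⁻¹' {w | E (x i) w}) (fun i => (↑) ⁻¹' {w | E w (x i)})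
  have hT : ∀ t, δA - 1 ≤ (T t).ncard := by
    have key (i : Fin c) := hbip.sub_one_le_ncard_preimage_diff_pair hsimple (hxA i) (hxS i).1
      (hxS i).2 (hδA ▸ Nat.sInf_le (Set.mem_image_of_mem _ (hxA i)))
    rintro (i | i)
    exacts [(key i).1, (key i).2]
  have hcard : Fintype.card ↥(B \ {y₁, y₂}) + 2 = m := by
    rw [← Nat.card_eq_fintype_card, Nat.card_coe_set_eq, ← Set.ncard_pair hyne,
      Set.ncard_sdiff_add_ncard_of_subset (Set.pair_subset hy₁ hy₂), hB]
  have hlt := Nat.mul_descFactorial_lt_of_lt_div_pow (K := Fintype.card (Fin c ⊕ Fin c) * c)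
    (d := δA) (e := Fintype.card ↥(B \ {y₁, y₂}) / c) (by simp; nlinarith) (Nat.div_le_self _ _)
    (by subst hcard; simpa [sq, ← two_mul, mul_assoc] using hineq)
  obtain ⟨χ, hχ⟩ := exists_coloring_forall_exists_mem hc₀ T hT (Nat.mul_div_le _ c) hlt
  exact le_dib (isBColoring_liftColoring hbip hsimple hy₁ hy₂ x hx χ
    (fun i j => hχ (.inl i) j) fun i j => hχ (.inr i) j)

/-- if 2·c(y₁,y₂)² < ((m−2)/(m−2−(δ_A−1)))^⌊(m−2)/c(y₁,y₂)⌋ for some pair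
y₁, y₂ ∈ B, then dib ≥ c(y₁,y₂) + 1. -/
theorem stmt16 {V : Type*} [Fintype V] (E : V → V → Prop) (A B : Set V)
    (hbip : IsBipartition E A B) (hsimple : SimpleDigraph' E)
    (n m : ℕ) (hA : A.ncard = n) (hB : B.ncard = m) (hnm : n ≤ m)
    (δA : ℕ) (hδA : δA = sInf ((fun x => min (outDeg E x) (inDeg E x)) '' A))
    (y₁ y₂ : V) (hy₁ : y₁ ∈ B) (hy₂ : y₂ ∈ B) (hyne : y₁ ≠ y₂)
    (c : ℕ) (hc : c = ({w | E y₁ w} ∩ {w | E w y₂}).ncard)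
    (hineq : 2 * (c : ℝ) ^ 2 <
      (((m : ℝ) - 2) / ((m : ℝ) - 2 - ((δA : ℝ) - 1))) ^ ((m - 2) / c)) :
    c + 1 ≤ dib E :=
  stmt16_general E A B hbip hsimple m hB δA hδA y₁ y₂ hy₁ hy₂ hyne c hc hineq
end

section
/- Let D = (A,B) be an orientation of K_{n,m} with n ≤ m such that Σ_{x∈A} d⁺(x) ≥ Σ_{x∈A} d⁻(x), and let r be a positive integer. If there is no pair of sets A' ⊆ A, B' ⊆ B with |A'| = |B'| = r and all arcs directed from A' to B' (a copy of K⃗_{r,r}), then (r−1)·C(m,r) ≥ n·C(⌊m/2⌋, r), where C(·,·) denotes binomial coefficients. -/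
open Classical

lemma chooseL1 (s t : ℕ) : ∀ d, t ≤ d →
    Nat.choose t (s+1) + (d - t) * Nat.choose t s ≤ Nat.choose d (s+1) := by
  intro d hd
  induction d, hd using Nat.le_induction with
  | base => simp
  | succ d hd ih =>
    have h1 : Nat.choose t s ≤ Nat.choose d s := Nat.choose_le_choose s hd
    have h2 : d + 1 - t = (d - t) + 1 := by omega
    rw [h2, Nat.choose_succ_succ, Nat.add_mul, one_mul]
    simp only [Nat.succ_eq_add_one] at *
    linarith

lemma chooseL2 (s d : ℕ) : ∀ t, d ≤ t →
    Nat.choose t (s+1) ≤ Nat.choose d (s+1) + (t - d) * Nat.choose t s := by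
  intro t ht
  induction t, ht using Nat.le_induction with
  | base => simp
  | succ t ht ih =>
    have h1 : Nat.choose t s ≤ Nat.choose (t+1) s := Nat.choose_le_choose s (by omega)
    have h2 : (t - d) * Nat.choose t s ≤ (t - d) * Nat.choose (t+1) s :=
      Nat.mul_le_mul_left _ h1
    have h3 : t + 1 - d = (t - d) + 1 := by omega
    rw [h3, Nat.choose_succ_succ, Nat.add_mul, one_mul]
    simp only [Nat.succ_eq_add_one] at *
    linarith

lemma chooseKeyZ (s t d : ℕ) :
    (Nat.choose t (s+1) : ℤ) - Nat.choose d (s+1) ≤ ((t : ℤ) - d) * Nat.choose t s := by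
  rcases le_total t d with h | h
  · have := chooseL1 s t d h
    have hc : ((d - t : ℕ) : ℤ) = (d : ℤ) - t := by omega
    have := (Nat.cast_le (α := ℤ)).2 this
    push_cast at this
    rw [hc] at this
    nlinarith [this]
  · have := chooseL2 s d t h
    have hc : ((t - d : ℕ) : ℤ) = (t : ℤ) - d := by omega
    have := (Nat.cast_le (α := ℤ)).2 this
    push_cast at this
    rw [hc] at this
    linarith

/-- in an orientation of K_{n,m} with Σ_{x∈A} d⁺(x) ≥ Σ_{x∈A} d⁻(x) and
no copy of K⃗_{r,r}, we have (r−1)·C(m,r) ≥ n·C(⌊m/2⌋,r). -/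
theorem stmt18 {V : Type*} [Fintype V] [DecidableEq V] (E : V → V → Prop)
    (A B : Finset V)
    (hbip : IsBipartition E (↑A : Set V) (↑B : Set V)) (hsimple : SimpleDigraph' E)
    (horient : ∀ a ∈ A, ∀ b ∈ B, E a b ∨ E b a)
    (n m : ℕ) (hA : A.card = n) (hB : B.card = m) (hnm : n ≤ m)
    (hsum : ∑ x ∈ A, inDeg E x ≤ ∑ x ∈ A, outDeg E x)
    (r : ℕ) (hr : 1 ≤ r)
    (hnoK : ¬ ∃ (A' : Finset V) (B' : Finset V), A' ⊆ A ∧ B' ⊆ B ∧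
      A'.card = r ∧ B'.card = r ∧ ∀ a ∈ A', ∀ b ∈ B', E a b) :
    n * Nat.choose (m / 2) r ≤ (r - 1) * Nat.choose m r := by
  classical
  obtain ⟨s, rfl⟩ : ∃ s, r = s + 1 := ⟨r - 1, by omega⟩
  have hAB : ∀ x ∈ A, x ∉ B := fun x hx hx' =>
    Set.disjoint_left.1 hbip.1 (by exact_mod_cast hx) (by exact_mod_cast hx')
  set Bo : V → Finset V := fun x => B.filter (fun b => E x b) with hBo
  set Bi : V → Finset V := fun x => B.filter (fun b => E b x) with hBi
  have hout : ∀ x ∈ A, outDeg E x = (Bo x).card := by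
    intro x hx
    have hset : {w | E x w} = (↑(Bo x) : Set V) := by
      ext w
      simp only [Set.mem_setOf_eq, hBo, Finset.coe_filter, Set.mem_setOf_eq, Finset.mem_coe]
      constructor
      · intro h
        rcases hbip.2.2 x w h with ⟨_, hw⟩ | ⟨hx', _⟩
        · exact ⟨by exact_mod_cast hw, h⟩
        · exact absurd (by exact_mod_cast hx' : x ∈ B) (hAB x hx)
      · exact fun h => h.2
    rw [outDeg, hset, Set.ncard_coe_finset]
  have hin : ∀ x ∈ A, inDeg E x = (Bi x).card := by
    intro x hx
    have hset : {w | E w x} = (↑(Bi x) : Set V) := by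
      ext w
      simp only [Set.mem_setOf_eq, hBi, Finset.coe_filter, Set.mem_setOf_eq, Finset.mem_coe]
      constructor
      · intro h
        rcases hbip.2.2 w x h with ⟨hw, hx'⟩ | ⟨hx', hw⟩
        · exact absurd (by exact_mod_cast hx' : x ∈ B) (hAB x hx)
        · exact ⟨by exact_mod_cast hx', h⟩
      · exact fun h => h.2
    rw [inDeg, hset, Set.ncard_coe_finset]
  have hdeg : ∀ x ∈ A, (Bo x).card + (Bi x).card = m := by
    intro x hx
    have hBieq : Bi x = B.filter (fun b => ¬ E x b) := by
      apply Finset.filter_congr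
      intro b hb
      constructor
      · exact fun h => hsimple b x h
      · intro h
        rcases horient x hx b hb with h' | h'
        · exact absurd h' h
        · exact h'
    rw [hBieq, hBo]
    rw [Finset.card_filter_add_card_filter_not, hB]
  -- sum of out-degrees is at least n * (m/2)
  have hsumdeg : n * (m / 2) ≤ ∑ x ∈ A, (Bo x).card := by
    have h1 : ∑ x ∈ A, ((Bo x).card + (Bi x).card) = n * m := by
      rw [Finset.sum_congr rfl hdeg, Finset.sum_const, hA, smul_eq_mul]
    rw [Finset.sum_add_distrib] at h1
    have h2 : ∑ x ∈ A, (Bi x).card ≤ ∑ x ∈ A, (Bo x).card := by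
      rwa [Finset.sum_congr rfl hin, Finset.sum_congr rfl hout] at hsum
    have h3 : 2 * (m / 2) ≤ m := by omega
    have h4 : n * (2 * (m / 2)) ≤ n * m := Nat.mul_le_mul_left n h3
    have h5 : n * (2 * (m / 2)) = 2 * (n * (m / 2)) := by ring
    omega
  -- counting upper bound
  set P := B.powersetCard (s + 1) with hP
  have hcount : ∑ x ∈ A, Nat.choose ((Bo x).card) (s + 1) ≤ s * Nat.choose m (s + 1) := by
    have step1 : ∀ x ∈ A, Nat.choose ((Bo x).card) (s + 1)
        = (P.filter (fun T => ∀ b ∈ T, E x b)).card := by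
      intro x hx
      rw [← Finset.card_powersetCard (s + 1) (Bo x)]
      congr 1
      ext T
      simp only [Finset.mem_powersetCard, hP, Finset.mem_filter, hBo, Finset.subset_iff,
        Finset.mem_filter]
      constructor
      · rintro ⟨h1, h2⟩
        exact ⟨⟨fun a ha => (h1 ha).1, h2⟩, fun b hb => (h1 hb).2⟩
      · rintro ⟨⟨h1, h2⟩, h3⟩
        exact ⟨fun a ha => ⟨h1 ha, h3 a ha⟩, h2⟩
    rw [Finset.sum_congr rfl step1]
    have swap : ∑ x ∈ A, (P.filter (fun T => ∀ b ∈ T, E x b)).card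
        = ∑ T ∈ P, (A.filter (fun x => ∀ b ∈ T, E x b)).card := by
      simp only [Finset.card_filter]
      exact Finset.sum_comm
    rw [swap]
    have bound : ∀ T ∈ P, (A.filter (fun x => ∀ b ∈ T, E x b)).card ≤ s := by
      intro T hT
      by_contra h
      push_neg at h
      obtain ⟨A', hA'sub, hA'card⟩ :=
        Finset.exists_subset_card_eq (show s + 1 ≤ (A.filter (fun x => ∀ b ∈ T, E x b)).card by omega)
      obtain ⟨hTsub, hTcard⟩ := Finset.mem_powersetCard.1 hT
      exact hnoK ⟨A', T, hA'sub.trans (Finset.filter_subset _ _), hTsub, hA'card, hTcard,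
        fun a ha b hb => (Finset.mem_filter.1 (hA'sub ha)).2 b hb⟩
    calc ∑ T ∈ P, (A.filter (fun x => ∀ b ∈ T, E x b)).card
        ≤ ∑ _T ∈ P, s := Finset.sum_le_sum bound
      _ = P.card * s := by rw [Finset.sum_const, smul_eq_mul]
      _ = s * Nat.choose m (s + 1) := by
          rw [hP, Finset.card_powersetCard, hB, Nat.mul_comm]
  -- convexity lower bound
  have keylow : (n : ℤ) * Nat.choose (m / 2) (s + 1)
      ≤ ∑ x ∈ A, (Nat.choose ((Bo x).card) (s + 1) : ℤ) := by
    have h1 : ∑ x ∈ A, ((Nat.choose (m / 2) (s + 1) : ℤ) - Nat.choose ((Bo x).card) (s + 1))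
        ≤ ∑ x ∈ A, (((m / 2 : ℕ) : ℤ) - ((Bo x).card : ℤ)) * (Nat.choose (m / 2) s : ℤ) :=
      Finset.sum_le_sum fun x _ => chooseKeyZ s (m / 2) ((Bo x).card)
    rw [Finset.sum_sub_distrib, ← Finset.sum_mul, Finset.sum_sub_distrib,
      Finset.sum_const, hA, Finset.sum_const] at h1
    have h2 : ((n : ℤ)) * ((m / 2 : ℕ) : ℤ) ≤ ∑ x ∈ A, ((Bo x).card : ℤ) := by
      have := hsumdeg
      push_cast
      exact_mod_cast this
    have h3 : (0 : ℤ) ≤ (Nat.choose (m / 2) s : ℤ) := Nat.cast_nonneg _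
    simp only [nsmul_eq_mul, hA] at h1
    nlinarith [h1, h2, h3]
  have final : (n : ℤ) * Nat.choose (m / 2) (s + 1) ≤ (s : ℤ) * Nat.choose m (s + 1) := by
    calc (n : ℤ) * Nat.choose (m / 2) (s + 1)
        ≤ ∑ x ∈ A, (Nat.choose ((Bo x).card) (s + 1) : ℤ) := keylow
      _ = ((∑ x ∈ A, Nat.choose ((Bo x).card) (s + 1) : ℕ) : ℤ) := by push_cast; ring_nf
      _ ≤ ((s * Nat.choose m (s + 1) : ℕ) : ℤ) := by exact_mod_cast hcount
      _ = (s : ℤ) * Nat.choose m (s + 1) := by push_cast; ring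
  have : s + 1 - 1 = s := by omega
  rw [this]
  exact_mod_cast final
end

section
/- Let D = (A,B) be a bipartite digraph that is an orientation of K_{n,m} (so D has no digons and every A–B pair is joined by exactly one arc), and suppose D contains a subdigraph isomorphic to K⃗_{r,r}, i.e., sets A' = {x₁,…,x_r} ⊆ A and B' = {y₁,…,y_r} ⊆ B with every arc x_i y_j present (directed from A' to B'), where r ≥ 2. Then the coloring assigning color i to x_i and y_i for i ∈ {1,…,r}, color 1 to all remaining vertices of A, and color 2 to all remaining vertices of B, is an acyclic b-coloring of D with r colors; hence dib(D) ≥ r. -/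
open Classical

/-- Auxiliary: if every arc crosses between `P` and `Q`, there are no digons, and
`S ∩ Q` is a subsingleton, then `S` induces no closed walk. -/
theorem acyclicSet_of_subsingleton_side {V : Type*} (E : V → V → Prop) (P Q : Set V)
    (hdisj : Disjoint P Q)
    (hcross : ∀ u v, E u v → (u ∈ P ∧ v ∈ Q) ∨ (u ∈ Q ∧ v ∈ P))
    (hsimple : SimpleDigraph' E) (S : Set V)
    (hsub : ∀ u ∈ S, u ∈ Q → ∀ v ∈ S, v ∈ Q → u = v) :
    AcyclicSet E S := by
  rintro ⟨n, c, hS, harc⟩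
  have hQ : ∃ i : Fin (n + 1), c i ∈ Q := by
    rcases hcross _ _ (harc 0) with h | h
    · exact ⟨0 + 1, h.2⟩
    · exact ⟨0, h.1⟩
  obtain ⟨i, hi⟩ := hQ
  have h1 : c (i + 1) ∈ P := by
    rcases hcross _ _ (harc i) with h | h
    · exact absurd hi (Set.disjoint_left.mp hdisj h.1)
    · exact h.2
  have h2 : c (i + 1 + 1) ∈ Q := by
    rcases hcross _ _ (harc (i + 1)) with h | h
    · exact h.2
    · exact absurd h.1 (Set.disjoint_left.mp hdisj h1)
  have heq : c (i + 1 + 1) = c i := hsub _ (hS _) h2 _ (hS _) hi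
  have := harc (i + 1)
  rw [heq] at this
  exact hsimple _ _ (harc i) this

/-- if an orientation of K_{n,m} contains a copy of K⃗_{r,r} (r ≥ 2), then
the coloring giving color i to x_i and y_i, color 1 (index 0) to the remaining vertices
of A and color 2 (index 1) to the remaining vertices of B, is an acyclic b-coloring with
r colors; hence dib ≥ r. -/
theorem stmt19 {V : Type*} [Fintype V] (E : V → V → Prop) (A B : Set V)
    (hbip : IsBipartition E A B) (hsimple : SimpleDigraph' E)
    (horient : ∀ a ∈ A, ∀ b ∈ B, E a b ∨ E b a)
    (r : ℕ) (hr : 2 ≤ r)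
    (x y : Fin r → V) (hxinj : Function.Injective x) (hyinj : Function.Injective y)
    (hxA : ∀ i, x i ∈ A) (hyB : ∀ i, y i ∈ B)
    (harcs : ∀ i j, E (x i) (y j)) :
    IsBColoring E (fun v =>
      if h : ∃ i, x i = v then h.choose
      else if h : ∃ i, y i = v then h.choose
      else if v ∈ A then (⟨0, by omega⟩ : Fin r) else ⟨1, by omega⟩) ∧
    r ≤ dib E := by
  obtain ⟨hdisj, hcov, hcross⟩ := hbip
  set Γ : V → Fin r := fun v =>
      if h : ∃ i, x i = v then h.choose
      else if h : ∃ i, y i = v then h.choose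
      else if v ∈ A then (⟨0, by omega⟩ : Fin r) else ⟨1, by omega⟩ with hΓ
  have hxy : ∀ i j, x i ≠ y j := by
    intro i j h
    exact Set.disjoint_left.mp hdisj (h ▸ hxA i) (hyB j)
  have hΓx : ∀ i, Γ (x i) = i := by
    intro i
    have hex : ∃ i', x i' = x i := ⟨i, rfl⟩
    simp only [hΓ]
    rw [dif_pos hex]
    exact hxinj hex.choose_spec
  have hΓy : ∀ i, Γ (y i) = i := by
    intro i
    have hne : ¬∃ i', x i' = y i := fun ⟨i', h⟩ => hxy i' i h
    have hex : ∃ i', y i' = y i := ⟨i, rfl⟩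
    simp only [hΓ]
    rw [dif_neg hne, dif_pos hex]
    exact hyinj hex.choose_spec
  have hBchar : ∀ v ∈ B, ∀ j : Fin r, Γ v = j → j ≠ ⟨1, by omega⟩ → v = y j := by
    intro v hv j hj hj1
    by_cases hex : ∃ i, y i = v
    · obtain ⟨i, rfl⟩ := hex
      rw [hΓy] at hj
      rw [hj]
    · have hnx : ¬∃ i, x i = v := by
        rintro ⟨i, rfl⟩
        exact Set.disjoint_left.mp hdisj (hxA i) hv
      have hnA : v ∉ A := fun hvA => Set.disjoint_left.mp hdisj hvA hv
      simp only [hΓ, dif_neg hnx, dif_neg hex, if_neg hnA] at hj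
      exact absurd hj hj1.symm
  have hAchar : ∀ v ∈ A, ∀ j : Fin r, Γ v = j → j ≠ ⟨0, by omega⟩ → v = x j := by
    intro v hv j hj hj0
    by_cases hex : ∃ i, x i = v
    · obtain ⟨i, rfl⟩ := hex
      rw [hΓx] at hj
      rw [hj]
    · have hny : ¬∃ i, y i = v := by
        rintro ⟨i, rfl⟩
        exact Set.disjoint_left.mp hdisj hv (hyB i)
      simp only [hΓ, dif_neg hex, dif_neg hny, if_pos hv] at hj
      exact absurd hj hj0.symm
  have h01 : (⟨1, by omega⟩ : Fin r) ≠ ⟨0, by omega⟩ := by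
    simp [Fin.ext_iff]
  have key : IsBColoring E Γ := by
    constructor
    · intro j
      by_cases hj1 : j = ⟨1, by omega⟩
      · refine acyclicSet_of_subsingleton_side E B A hdisj.symm
          (fun u v h => (hcross u v h).symm) hsimple _ ?_
        intro u hu huA v hv hvA
        rw [hAchar u huA j hu (hj1 ▸ h01), hAchar v hvA j hv (hj1 ▸ h01)]
      · refine acyclicSet_of_subsingleton_side E A B hdisj hcross hsimple _ ?_
        intro u hu huB v hv hvB
        rw [hBchar u huB j hu hj1, hBchar v hvB j hv hj1]
    · intro i
      refine ⟨⟨x i, hΓx i, ?_⟩, ⟨y i, hΓy i, ?_⟩⟩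
      · intro j _
        exact ⟨y j, harcs i j, hΓy j⟩
      · intro j _
        exact ⟨x j, harcs j i, hΓx j⟩
  have hbdd : BddAbove {k | ∃ Γ : V → Fin k, IsBColoring E Γ} := by
    refine ⟨Fintype.card V, ?_⟩
    rintro k ⟨Γ', hΓ'⟩
    have hsurj : Function.Surjective Γ' := fun i => by
      obtain ⟨u, hu, _⟩ := (hΓ'.2 i).1
      exact ⟨u, hu⟩
    simpa using Fintype.card_le_of_surjective Γ' hsurj
  exact ⟨key, le_csSup hbdd ⟨Γ, key⟩⟩
end
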